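/- arXiv:2605.20928 — 2 statements merged into one kernel-verified Lean document; each statement's English description precedes it below -/
import Mathlib

section
/- For non-empty I ⊆ {1,…,r−1}, the Coxeter length of c_I equals r(r−1) − (2r − 2·min I − #I). Equivalently, the number of positive roots sent to positive roots by c_I is 2r − 2·min I − #I. -/
noncomputable section

open Finset

/-- `ee r i` is the standard basis vector `e_i` (1-based index) of `ℝ^r`. -/
def ee (r i : ℕ) : Fin r → ℝ := fun j => if (j : ℕ) + 1 = i then 1 else 0

/-- The type-`D_r` simple roots, 1-based: `α_i = e_i - e_{i+1}` for `i ≤ r-1`,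
`α_r = e_{r-1} + e_r`. -/
def sroot (r i : ℕ) : Fin r → ℝ :=
  if i = r then ee r (r - 1) + ee r r else ee r i - ee r (i + 1)

/-- Root-poset order: `ρ ≤ η` iff `η - ρ` is a non-negative integer combination
of the simple roots. -/
def rootLE (r : ℕ) (ρ η : Fin r → ℝ) : Prop :=
  ∃ m : ℕ → ℕ, η - ρ = ∑ i ∈ Finset.Icc 1 r, (m i : ℝ) • sroot r i

/-- The positive roots of type `D_r`: `e_i ± e_j` for `1 ≤ i < j ≤ r`. -/
def Pos (r : ℕ) : Set (Fin r → ℝ) :=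
  {v | ∃ i j, 1 ≤ i ∧ i < j ∧ j ≤ r ∧ (v = ee r i - ee r j ∨ v = ee r i + ee r j)}

/-- The `i`-th (1-based) coordinate of a vector. -/
def coordN (r : ℕ) (x : Fin r → ℝ) (i : ℕ) : ℝ :=
  ∑ j : Fin r, if (j : ℕ) + 1 = i then x j else 0

/-- The successor map on `I ∪ {r}`: least element of `I ∪ {r}` larger than `a`. -/
def nextI (r : ℕ) (I : Finset ℕ) (a : ℕ) : ℕ :=
  WithTop.untopD r (((insert r I).filter (fun x => a < x)).min)

/-- `min (I ∪ {r})`; equals `min I` for nonempty `I ⊆ {1,…,r-1}` and `r` for `I = ∅`. -/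
def minI (r : ℕ) (I : Finset ℕ) : ℕ := WithTop.untopD r ((insert r I).min)

/-- `max I` (0 if empty). -/
def maxI (I : Finset ℕ) : ℕ := WithBot.unbotD 0 (I.max)

/-- The increasing cycle `p_I` on `I ∪ {r}`, fixing all other points. -/
def pI (r : ℕ) (I : Finset ℕ) (a : ℕ) : ℕ :=
  if a ∈ I then nextI r I a else if a = r then minI r I else a

/-- Images of the basis vectors under `c_I`. -/
def cIb (r : ℕ) (I : Finset ℕ) (j : ℕ) : Fin r → ℝ :=
  if j = r then ee r (minI r I) else -(ee r (pI r I j))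

/-- The signed permutation `c_I`, extended linearly; for `I = ∅` it is `w_0`. -/
def cI (r : ℕ) (I : Finset ℕ) (x : Fin r → ℝ) : Fin r → ℝ :=
  ∑ j ∈ Finset.Icc 1 r, coordN r x j • cIb r I j

/-- Images of the basis vectors under `d_I`. -/
def dIb (r : ℕ) (I : Finset ℕ) (j : ℕ) : Fin r → ℝ :=
  if j = maxI I then ee r r
  else if j = r then -(ee r (minI r I))
  else -(ee r (pI r I j))

/-- The signed permutation `d_I`, extended linearly. -/
def dI (r : ℕ) (I : Finset ℕ) (x : Fin r → ℝ) : Fin r → ℝ :=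
  ∑ j ∈ Finset.Icc 1 r, coordN r x j • dIb r I j

/-- The longest element `w_0` for `r` odd: `e_i ↦ -e_i` for `i < r`, `e_r ↦ e_r`. -/
def w0 (r : ℕ) (x : Fin r → ℝ) : Fin r → ℝ :=
  fun j => if (j : ℕ) + 1 = r then x j else -(x j)

/-- The set `A_I`. -/
def AI (r : ℕ) (I : Finset ℕ) : Set (Fin r → ℝ) :=
  {v | ∃ a b, a ∈ I ∧ a < b ∧ b < nextI r I a ∧ v = ee r b - ee r (nextI r I a)}

/-- The set `B_I`. -/
def BI (r : ℕ) (I : Finset ℕ) : Set (Fin r → ℝ) :=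
  {v | ∃ q, minI r I < q ∧ q ≤ r ∧ v = ee r (minI r I) - ee r q}

/-- `ν₀(u) = u(Π₊) ∩ Π₊`. -/
def nu0 (r : ℕ) (u : (Fin r → ℝ) → (Fin r → ℝ)) : Set (Fin r → ℝ) :=
  {β | β ∈ Pos r ∧ ∃ γ ∈ Pos r, u γ = β}

/-- Arrow `α → β` in the rationality graph of `u`: `u⁻¹(α) ≤ β`,
expressed via a positive preimage `γ` of `α`. -/
def Arrow (r : ℕ) (u : (Fin r → ℝ) → (Fin r → ℝ)) (α β : Fin r → ℝ) : Prop :=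
  ∃ γ ∈ Pos r, u γ = α ∧ rootLE r γ β

/-- The rationality graph of `u` has a directed cycle. -/
def HasCycle (r : ℕ) (u : (Fin r → ℝ) → (Fin r → ℝ)) : Prop :=
  ∃ (n : ℕ) (f : ℕ → (Fin r → ℝ)), 0 < n ∧ (∀ i ≤ n, f i ∈ nu0 r u) ∧
    f 0 = f n ∧ ∀ i < n, Arrow r u (f i) (f (i + 1))

/-- The simple reflection `s_a` for `1 ≤ a ≤ r-1`: swaps coordinates `a` and `a+1`. -/
def sw (r a : ℕ) (x : Fin r → ℝ) : Fin r → ℝ := fun j =>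
  if (j : ℕ) + 1 = a then coordN r x (a + 1)
  else if (j : ℕ) + 1 = a + 1 then coordN r x a
  else x j

/-- The spin reflection `s_r`: `e_{r-1} ↦ -e_r`, `e_r ↦ -e_{r-1}`. -/
def sSpin (r : ℕ) (x : Fin r → ℝ) : Fin r → ℝ := fun j =>
  if (j : ℕ) + 1 = r - 1 then -(coordN r x r)
  else if (j : ℕ) + 1 = r then -(coordN r x (r - 1))
  else x j


lemma coordN_apply {r a : ℕ} (h1 : 1 ≤ a) (h2 : a ≤ r) (x : Fin r → ℝ) :
    coordN r x a = x ⟨a - 1, by omega⟩ := by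
  unfold coordN
  rw [Finset.sum_eq_single (⟨a - 1, by omega⟩ : Fin r)]
  · simp; omega
  · intro b _ hb
    have : (b : ℕ) + 1 ≠ a := by
      intro h; apply hb; apply Fin.ext; simp; omega
    simp [this]
  · intro h; exact absurd (Finset.mem_univ _) h

lemma coordN_out {r a : ℕ} (h : a = 0 ∨ r < a) (x : Fin r → ℝ) : coordN r x a = 0 := by
  unfold coordN
  apply Finset.sum_eq_zero
  intro j _
  have : (j : ℕ) + 1 ≠ a := by have := j.isLt; omega
  simp [this]

lemma coordN_ee {r a b : ℕ} : coordN r (ee r b) a = if b = a ∧ 1 ≤ a ∧ a ≤ r then 1 else 0 := by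
  by_cases h : 1 ≤ a ∧ a ≤ r
  · rw [coordN_apply h.1 h.2]
    show (if (a - 1) + 1 = b then (1:ℝ) else 0) = _
    split_ifs with h1 h2 <;> first | rfl | (exfalso; omega)
  · rw [coordN_out (by omega)]
    rw [if_neg (by omega)]

lemma coordN_add {r : ℕ} (x y : Fin r → ℝ) (a : ℕ) :
    coordN r (x + y) a = coordN r x a + coordN r y a := by
  unfold coordN
  rw [← Finset.sum_add_distrib]
  congr 1; ext j; split <;> simp

lemma coordN_sub {r : ℕ} (x y : Fin r → ℝ) (a : ℕ) :
    coordN r (x - y) a = coordN r x a - coordN r y a := by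
  unfold coordN
  rw [← Finset.sum_sub_distrib]
  congr 1; ext j; split <;> simp

lemma coordN_neg {r : ℕ} (x : Fin r → ℝ) (a : ℕ) :
    coordN r (-x) a = -(coordN r x a) := by
  unfold coordN
  rw [← Finset.sum_neg_distrib]
  congr 1; ext j; split <;> simp

/-- evaluate an equation of vectors at coordinate t -/
lemma eval_eq {r : ℕ} {x y : Fin r → ℝ} (h : x = y) (t : ℕ) :
    coordN r x t = coordN r y t := by rw [h]

lemma pos_sub_iff {r a b : ℕ} (ha : 1 ≤ a) (har : a ≤ r) (hb : 1 ≤ b) (hbr : b ≤ r)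
    (hab : a ≠ b) : (ee r a - ee r b ∈ Pos r) ↔ a < b := by
  constructor
  · rintro ⟨i, j, hi, hij, hjr, (h | h)⟩
    · have H1 := eval_eq h i
      have H2 := eval_eq h j
      simp only [coordN_sub, coordN_ee, true_and] at H1 H2
      split_ifs at H1 H2 <;>
        first | omega | norm_num at H1 H2 | norm_num at H1 | norm_num at H2
    · have H1 := eval_eq h i
      have H2 := eval_eq h j
      simp only [coordN_sub, coordN_add, coordN_ee, true_and] at H1 H2
      split_ifs at H1 H2 <;>
        first | omega | norm_num at H1 H2 | norm_num at H1 | norm_num at H2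
  · intro h
    exact ⟨a, b, ha, h, hbr, Or.inl rfl⟩

lemma pos_add {r a b : ℕ} (ha : 1 ≤ a) (har : a ≤ r) (hb : 1 ≤ b) (hbr : b ≤ r)
    (hab : a ≠ b) : (ee r a + ee r b ∈ Pos r) := by
  rcases Nat.lt_or_ge a b with h | h
  · exact ⟨a, b, ha, h, hbr, Or.inr rfl⟩
  · exact ⟨b, a, hb, by omega, har, Or.inr (by ring)⟩

lemma not_pos_neg_add {r a b : ℕ} : ¬ (-(ee r a + ee r b) ∈ Pos r) := by
  rintro ⟨i, j, hi, hij, hjr, (h | h)⟩ <;>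
  · have H1 := eval_eq h i
    simp only [coordN_sub, coordN_add, coordN_neg, coordN_ee, true_and] at H1
    split_ifs at H1 <;> first | omega | norm_num at H1

lemma cI_ee {r : ℕ} (I : Finset ℕ) {a : ℕ} (ha : 1 ≤ a) (har : a ≤ r) :
    cI r I (ee r a) = cIb r I a := by
  unfold cI
  rw [Finset.sum_eq_single a]
  · rw [coordN_ee, if_pos ⟨rfl, ha, har⟩, one_smul]
  · intro b hb hba
    rw [coordN_ee, if_neg (by tauto), zero_smul]
  · intro h; exact absurd (Finset.mem_Icc.2 ⟨ha, har⟩) h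

lemma cI_add {r : ℕ} (I : Finset ℕ) (x y : Fin r → ℝ) :
    cI r I (x + y) = cI r I x + cI r I y := by
  unfold cI
  rw [← Finset.sum_add_distrib]
  congr 1; ext j; rw [coordN_add, add_smul]

lemma cI_sub {r : ℕ} (I : Finset ℕ) (x y : Fin r → ℝ) :
    cI r I (x - y) = cI r I x - cI r I y := by
  unfold cI
  rw [← Finset.sum_sub_distrib]
  congr 1; ext j; rw [coordN_sub, sub_smul]

def prevI (I : Finset ℕ) (j : ℕ) : ℕ := WithBot.unbotD 0 ((I.filter (· < j)).max)

section comb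
variable {r : ℕ} {I : Finset ℕ}

lemma minI_spec (hI : I.Nonempty) (hIs : I ⊆ Finset.Icc 1 (r-1)) (hr : 5 ≤ r) :
    minI r I ∈ I ∧ ∀ a ∈ I, minI r I ≤ a := by
  set G := insert r I with hG
  have hGne : G.Nonempty := ⟨r, by simp [hG]⟩
  have h1 := (Finset.coe_min' hGne).symm
  have h2 : minI r I = G.min' hGne := by
    unfold minI; rw [← hG, h1, WithTop.untopD_coe]
  have h3 := G.min'_mem hGne
  rw [← h2] at h3
  have h4 : ∀ a ∈ I, minI r I ≤ a := by
    intro a ha; rw [h2]; exact G.min'_le a (by simp [hG, ha])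
  rw [hG, Finset.mem_insert] at h3
  rcases h3 with h3 | h3
  · exfalso
    obtain ⟨a, ha⟩ := hI
    have := h4 a ha
    have := hIs ha
    simp [Finset.mem_Icc] at this
    omega
  · exact ⟨h3, h4⟩

lemma minI_mem (hI : I.Nonempty) (hIs : I ⊆ Finset.Icc 1 (r-1)) (hr : 5 ≤ r) :
    minI r I ∈ I := (minI_spec hI hIs hr).1

lemma minI_le (hI : I.Nonempty) (hIs : I ⊆ Finset.Icc 1 (r-1)) (hr : 5 ≤ r)
    {a : ℕ} (ha : a ∈ I) : minI r I ≤ a := (minI_spec hI hIs hr).2 a ha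

lemma nextI_spec (hr : 5 ≤ r) {a : ℕ} (ha : a < r) :
    nextI r I a ∈ insert r I ∧ a < nextI r I a ∧
      ∀ b ∈ insert r I, a < b → nextI r I a ≤ b := by
  set F := (insert r I).filter (fun x => a < x) with hF
  have hrF : r ∈ F := by simp [hF, ha]
  have hFne : F.Nonempty := ⟨r, hrF⟩
  have h1 := (Finset.coe_min' hFne).symm
  have h2 : nextI r I a = F.min' hFne := by
    unfold nextI; rw [← hF, h1, WithTop.untopD_coe]
  have h3 := F.min'_mem hFne
  rw [← h2] at h3
  rw [hF, Finset.mem_filter] at h3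
  refine ⟨h3.1, h3.2, ?_⟩
  intro b hb hab
  rw [h2]
  exact F.min'_le b (by simp [hF, hb, hab])

lemma prevI_spec {j : ℕ} (hI : I.Nonempty) (hIs : I ⊆ Finset.Icc 1 (r-1)) (hr : 5 ≤ r)
    (hj : minI r I < j) :
    prevI I j ∈ I ∧ prevI I j < j ∧ ∀ b ∈ I, b < j → b ≤ prevI I j := by
  set F := I.filter (· < j) with hF
  have hmF : minI r I ∈ F := by
    simp [hF, hj]; exact minI_mem hI hIs hr
  have hFne : F.Nonempty := ⟨_, hmF⟩
  have h1 := (Finset.coe_max' hFne).symm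
  have h2 : prevI I j = F.max' hFne := by
    unfold prevI; rw [← hF, h1, WithBot.unbotD_coe]
  have h3 := F.max'_mem hFne
  rw [← h2] at h3
  rw [hF, Finset.mem_filter] at h3
  refine ⟨h3.1, h3.2, ?_⟩
  intro b hb hbj
  rw [h2]
  exact F.le_max' b (by simp [hF, hb, hbj])

end comb

section pIsec
variable {r : ℕ} {I : Finset ℕ}

lemma mem_I_bounds (hIs : I ⊆ Finset.Icc 1 (r-1)) {a : ℕ} (ha : a ∈ I) :
    1 ≤ a ∧ a ≤ r - 1 := by have := hIs ha; simpa [Finset.mem_Icc] using this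

lemma pI_facts (hI : I.Nonempty) (hIs : I ⊆ Finset.Icc 1 (r-1)) (hr : 5 ≤ r)
    {i : ℕ} (hi1 : 1 ≤ i) (hi2 : i ≤ r - 1) :
    1 ≤ pI r I i ∧ pI r I i ≤ r ∧ pI r I i ≠ minI r I := by
  have hm := minI_mem hI hIs hr
  have hmb := mem_I_bounds hIs hm
  unfold pI
  by_cases hiI : i ∈ I
  · rw [if_pos hiI]
    obtain ⟨hmem, hlt, -⟩ := nextI_spec (I := I) hr (show i < r by omega)
    have hmle : minI r I ≤ i := minI_le hI hIs hr hiI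
    rcases Finset.mem_insert.1 hmem with h | h
    · omega
    · have := mem_I_bounds hIs h; omega
  · rw [if_neg hiI, if_neg (by omega)]
    refine ⟨hi1, by omega, fun h => hiI (h ▸ hm)⟩

lemma pI_gt_m_iff (hI : I.Nonempty) (hIs : I ⊆ Finset.Icc 1 (r-1)) (hr : 5 ≤ r)
    {i : ℕ} (hi1 : 1 ≤ i) (hi2 : i ≤ r - 1) :
    minI r I < pI r I i ↔ minI r I ≤ i := by
  have hm := minI_mem hI hIs hr
  unfold pI
  by_cases hiI : i ∈ I
  · rw [if_pos hiI]
    have hmle : minI r I ≤ i := minI_le hI hIs hr hiI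
    obtain ⟨-, hlt, -⟩ := nextI_spec (I := I) hr (show i < r by omega)
    constructor <;> intro <;> omega
  · rw [if_neg hiI, if_neg (by omega)]
    have : i ≠ minI r I := fun h => hiI (h ▸ hm)
    constructor <;> intro <;> omega

lemma pI_lt_iff (hI : I.Nonempty) (hIs : I ⊆ Finset.Icc 1 (r-1)) (hr : 5 ≤ r)
    {i j : ℕ} (hi1 : 1 ≤ i) (hij : i < j) (hj : j ≤ r - 1) :
    pI r I j < pI r I i ↔ i ∈ I ∧ j < nextI r I i := by
  have hjr : j ≠ r := by omega
  have hir : i ≠ r := by omega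
  obtain ⟨hiN, hilt, hile⟩ := nextI_spec (I := I) hr (show i < r by omega)
  obtain ⟨hjN, hjlt, hjle⟩ := nextI_spec (I := I) hr (show j < r by omega)
  unfold pI
  by_cases hiI : i ∈ I <;> by_cases hjI : j ∈ I
  · rw [if_pos hiI, if_pos hjI]
    have h1 : nextI r I i ≤ j := hile j (Finset.mem_insert_of_mem hjI) hij
    constructor
    · omega
    · rintro ⟨-, h⟩; omega
  · rw [if_pos hiI, if_neg hjI, if_neg hjr]
    constructor
    · intro h; exact ⟨hiI, h⟩
    · rintro ⟨-, h⟩; exact h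
  · rw [if_neg hiI, if_neg hir, if_pos hjI]
    constructor
    · intro h; omega
    · rintro ⟨h, -⟩; exact absurd h hiI
  · rw [if_neg hiI, if_neg hir, if_neg hjI, if_neg hjr]
    constructor
    · intro h; omega
    · rintro ⟨h, -⟩; exact absurd h hiI

lemma pI_ne (hI : I.Nonempty) (hIs : I ⊆ Finset.Icc 1 (r-1)) (hr : 5 ≤ r)
    {i j : ℕ} (hi1 : 1 ≤ i) (hij : i < j) (hj : j ≤ r - 1) :
    pI r I i ≠ pI r I j := by
  have hjr : j ≠ r := by omega
  have hir : i ≠ r := by omega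
  obtain ⟨hiN, hilt, hile⟩ := nextI_spec (I := I) hr (show i < r by omega)
  obtain ⟨hjN, hjlt, hjle⟩ := nextI_spec (I := I) hr (show j < r by omega)
  unfold pI
  by_cases hiI : i ∈ I <;> by_cases hjI : j ∈ I
  · rw [if_pos hiI, if_pos hjI]
    have h1 : nextI r I i ≤ j := hile j (Finset.mem_insert_of_mem hjI) hij
    omega
  · rw [if_pos hiI, if_neg hjI, if_neg hjr]
    intro h
    rcases Finset.mem_insert.1 hiN with h' | h'
    · omega
    · rw [h] at h'; exact hjI h'
  · rw [if_neg hiI, if_neg hir, if_pos hjI]; omega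
  · rw [if_neg hiI, if_neg hir, if_neg hjI, if_neg hjr]; omega

end pIsec

def SS (r : ℕ) : Finset (ℕ × ℕ) :=
  (Finset.Icc 1 r ×ˢ Finset.Icc 1 r).filter (fun p => p.1 < p.2)
def fd (r : ℕ) (p : ℕ × ℕ) : Fin r → ℝ := ee r p.1 - ee r p.2
def fs (r : ℕ) (p : ℕ × ℕ) : Fin r → ℝ := ee r p.1 + ee r p.2

lemma SS_mem {r : ℕ} {p : ℕ × ℕ} :
    p ∈ SS r ↔ 1 ≤ p.1 ∧ p.1 < p.2 ∧ p.2 ≤ r := by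
  unfold SS
  simp [Finset.mem_filter, Finset.mem_product, Finset.mem_Icc]
  omega

section keysec
variable {r : ℕ} {I : Finset ℕ}
lemma keyD (hI : I.Nonempty) (hIs : I ⊆ Finset.Icc 1 (r-1)) (hr : 5 ≤ r) {i j : ℕ} (hi : 1 ≤ i) (hij : i < j) (hjr : j ≤ r) :
    (cI r I (fd r (i, j)) ∈ Pos r ↔ (i ∈ I ∧ j < nextI r I i)) ∧
    (-(cI r I (fd r (i, j))) ∈ Pos r ↔ ¬(i ∈ I ∧ j < nextI r I i)) := by
  have hm := minI_mem hI hIs hr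
  have hmb := mem_I_bounds hIs hm
  have hir : i ≠ r := by omega
  have hpf := pI_facts hI hIs hr hi (by omega : i ≤ r - 1)
  obtain ⟨hiN, hilt, hile⟩ := nextI_spec (I := I) hr (show i < r by omega)
  have hnle : nextI r I i ≤ r := by
    rcases Finset.mem_insert.1 hiN with h | h
    · omega
    · exact (mem_I_bounds hIs h).2.trans (by omega)
  have hbase : cI r I (fd r (i, j)) = cIb r I i - cIb r I j := by
    unfold fd; rw [cI_sub, cI_ee I hi (by omega), cI_ee I (by omega) hjr]
  by_cases hjR : j = r
  · have hval : cI r I (fd r (i, j)) = -(ee r (pI r I i) + ee r (minI r I)) := by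
      rw [hbase]; unfold cIb; rw [if_neg hir, if_pos hjR]; abel
    constructor
    · rw [hval]
      simp only [not_pos_neg_add, false_iff]
      rintro ⟨-, h⟩; omega
    · rw [hval, neg_neg, iff_true_intro (pos_add hpf.1 hpf.2.1 hmb.1 (by omega) hpf.2.2)]
      simp only [true_iff]
      rintro ⟨-, h⟩; omega
  · have hj1 : j ≤ r - 1 := by omega
    have hqf := pI_facts hI hIs hr (by omega : 1 ≤ j) hj1
    have hne := pI_ne hI hIs hr hi hij hj1
    have hval : cI r I (fd r (i, j)) = ee r (pI r I j) - ee r (pI r I i) := by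
      rw [hbase]; unfold cIb; rw [if_neg hir, if_neg hjR]; abel
    constructor
    · rw [hval, pos_sub_iff hqf.1 hqf.2.1 hpf.1 hpf.2.1 (Ne.symm hne)]
      exact pI_lt_iff hI hIs hr hi hij hj1
    · rw [hval, show -(ee r (pI r I j) - ee r (pI r I i)) = ee r (pI r I i) - ee r (pI r I j) by abel,
         pos_sub_iff hpf.1 hpf.2.1 hqf.1 hqf.2.1 hne,
         ← pI_lt_iff hI hIs hr hi hij hj1]
      omega

lemma keyS (hI : I.Nonempty) (hIs : I ⊆ Finset.Icc 1 (r-1)) (hr : 5 ≤ r) {i j : ℕ} (hi : 1 ≤ i) (hij : i < j) (hjr : j ≤ r) :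
    (cI r I (fs r (i, j)) ∈ Pos r ↔ (j = r ∧ minI r I ≤ i)) ∧
    (-(cI r I (fs r (i, j))) ∈ Pos r ↔ ¬(j = r ∧ minI r I ≤ i)) := by
  have hm := minI_mem hI hIs hr
  have hmb := mem_I_bounds hIs hm
  have hir : i ≠ r := by omega
  have hpf := pI_facts hI hIs hr hi (by omega : i ≤ r - 1)
  have hbase : cI r I (fs r (i, j)) = cIb r I i + cIb r I j := by
    unfold fs; rw [cI_add, cI_ee I hi (by omega), cI_ee I (by omega) hjr]
  by_cases hjR : j = r
  · have hval : cI r I (fs r (i, j)) = ee r (minI r I) - ee r (pI r I i) := by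
      rw [hbase]; unfold cIb; rw [if_neg hir, if_pos hjR]; abel
    have hgt := pI_gt_m_iff hI hIs hr hi (by omega : i ≤ r - 1)
    constructor
    · rw [hval, pos_sub_iff hmb.1 (by omega) hpf.1 hpf.2.1 (Ne.symm hpf.2.2), hgt]
      simp [hjR]
    · rw [hval, show -(ee r (minI r I) - ee r (pI r I i)) = ee r (pI r I i) - ee r (minI r I) by abel,
         pos_sub_iff hpf.1 hpf.2.1 hmb.1 (by omega) hpf.2.2]
      constructor
      · intro h
        rintro ⟨-, h2⟩
        have := hgt.2 h2
        omega
      · intro h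
        have h2 : ¬ (minI r I ≤ i) := fun hh => h ⟨hjR, hh⟩
        have h3 : ¬ (minI r I < pI r I i) := fun hh => h2 (hgt.1 hh)
        have := hpf.2.2
        omega
  · have hj1 : j ≤ r - 1 := by omega
    have hqf := pI_facts hI hIs hr (by omega : 1 ≤ j) hj1
    have hne := pI_ne hI hIs hr hi hij hj1
    have hval : cI r I (fs r (i, j)) = -(ee r (pI r I i) + ee r (pI r I j)) := by
      rw [hbase]; unfold cIb; rw [if_neg hir, if_neg hjR]; abel
    constructor
    · rw [hval]
      simp only [not_pos_neg_add, false_iff]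
      rintro ⟨h, -⟩; omega
    · rw [hval, neg_neg, iff_true_intro (pos_add hpf.1 hpf.2.1 hqf.1 hqf.2.1 hne)]
      simp only [true_iff]
      rintro ⟨h, -⟩; omega

end keysec

section injsec
variable {r : ℕ}

lemma fd_inj' {a b c d : ℕ} (ha : 1 ≤ a) (hab : a < b) (hbr : b ≤ r)
    (hc : 1 ≤ c) (hcd : c < d) (hdr : d ≤ r) (h : fd r (a, b) = fd r (c, d)) :
    a = c ∧ b = d := by
  have H1 := eval_eq h a
  have H2 := eval_eq h b
  simp only [fd, coordN_sub, coordN_ee, true_and] at H1 H2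
  split_ifs at H1 H2 <;>
    first | omega | norm_num at H1 H2 | norm_num at H1 | norm_num at H2

lemma fs_inj' {a b c d : ℕ} (ha : 1 ≤ a) (hab : a < b) (hbr : b ≤ r)
    (hc : 1 ≤ c) (hcd : c < d) (hdr : d ≤ r) (h : fs r (a, b) = fs r (c, d)) :
    a = c ∧ b = d := by
  have H1 := eval_eq h a
  have H2 := eval_eq h b
  simp only [fs, coordN_add, coordN_ee, true_and] at H1 H2
  split_ifs at H1 H2 <;>
    first | omega | norm_num at H1 H2 | norm_num at H1 | norm_num at H2

lemma fd_ne_fs {a b c d : ℕ} (ha : 1 ≤ a) (hab : a < b) (hbr : b ≤ r)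
    (hc : 1 ≤ c) (hcd : c < d) (hdr : d ≤ r) : fd r (a, b) ≠ fs r (c, d) := by
  intro h
  have H1 := eval_eq h b
  simp only [fd, fs, coordN_sub, coordN_add, coordN_ee, true_and] at H1
  split_ifs at H1 <;> first | omega | norm_num at H1

lemma ncard_eq (P : (Fin r → ℝ) → Prop) (Q1 Q2 : ℕ × ℕ → Prop)
    [DecidablePred Q1] [DecidablePred Q2]
    (h1 : ∀ p ∈ SS r, (P (fd r p) ↔ Q1 p)) (h2 : ∀ p ∈ SS r, (P (fs r p) ↔ Q2 p)) :
    {β | β ∈ Pos r ∧ P β}.ncard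
      = ((SS r).filter Q1).card + ((SS r).filter Q2).card := by
  have hset : {β | β ∈ Pos r ∧ P β}
      = ↑((((SS r).filter Q1).image (fd r)) ∪ (((SS r).filter Q2).image (fs r))) := by
    ext β
    simp only [Set.mem_setOf_eq, Finset.coe_union, Set.mem_union, Finset.coe_image,
      Set.mem_image, Finset.mem_coe, Finset.mem_filter]
    constructor
    · rintro ⟨⟨i, j, hi, hij, hjr, (hf | hf)⟩, hP⟩
      · left
        have hS : (i, j) ∈ SS r := SS_mem.2 ⟨hi, hij, hjr⟩
        exact ⟨(i, j), ⟨hS, (h1 _ hS).1 (by rw [show fd r (i, j) = ee r i - ee r j from rfl, ← hf]; exact hP)⟩, hf.symm⟩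
      · right
        have hS : (i, j) ∈ SS r := SS_mem.2 ⟨hi, hij, hjr⟩
        exact ⟨(i, j), ⟨hS, (h2 _ hS).1 (by rw [show fs r (i, j) = ee r i + ee r j from rfl, ← hf]; exact hP)⟩, hf.symm⟩
    · rintro (⟨p, ⟨hS, hQ⟩, hf⟩ | ⟨p, ⟨hS, hQ⟩, hf⟩) <;>
        obtain ⟨h1', h2', h3'⟩ := SS_mem.1 hS
      · exact ⟨⟨p.1, p.2, h1', h2', h3', Or.inl hf.symm⟩, hf ▸ (h1 _ hS).2 hQ⟩
      · exact ⟨⟨p.1, p.2, h1', h2', h3', Or.inr hf.symm⟩, hf ▸ (h2 _ hS).2 hQ⟩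
  rw [hset, Set.ncard_coe_finset]
  rw [Finset.card_union_of_disjoint]
  · congr 1
    · apply Finset.card_image_of_injOn
      intro p hp q hq hpq
      obtain ⟨a1, a2, a3⟩ := SS_mem.1 (Finset.mem_filter.1 hp).1
      obtain ⟨b1, b2, b3⟩ := SS_mem.1 (Finset.mem_filter.1 hq).1
      have := fd_inj' a1 a2 a3 b1 b2 b3 (by simpa using hpq)
      exact Prod.ext this.1 this.2
    · apply Finset.card_image_of_injOn
      intro p hp q hq hpq
      obtain ⟨a1, a2, a3⟩ := SS_mem.1 (Finset.mem_filter.1 hp).1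
      obtain ⟨b1, b2, b3⟩ := SS_mem.1 (Finset.mem_filter.1 hq).1
      have := fs_inj' a1 a2 a3 b1 b2 b3 (by simpa using hpq)
      exact Prod.ext this.1 this.2
  · rw [Finset.disjoint_left]
    intro x hx hx'
    obtain ⟨p, hp, hfp⟩ := Finset.mem_image.1 hx
    obtain ⟨q, hq, hfq⟩ := Finset.mem_image.1 hx'
    obtain ⟨a1, a2, a3⟩ := SS_mem.1 (Finset.mem_filter.1 hp).1
    obtain ⟨b1, b2, b3⟩ := SS_mem.1 (Finset.mem_filter.1 hq).1
    exact fd_ne_fs a1 a2 a3 b1 b2 b3 (by rw [hfp, hfq])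

end injsec

section countsec
variable {r : ℕ} {I : Finset ℕ}

lemma countS (hI : I.Nonempty) (hIs : I ⊆ Finset.Icc 1 (r-1)) (hr : 5 ≤ r) :
    ((SS r).filter (fun p => p.2 = r ∧ minI r I ≤ p.1)).card = r - minI r I := by
  have hm := minI_mem hI hIs hr
  have hmb := mem_I_bounds hIs hm
  have heq : (SS r).filter (fun p => p.2 = r ∧ minI r I ≤ p.1)
      = (Finset.Icc (minI r I) (r-1)).image (fun i => (i, r)) := by
    ext ⟨p1, p2⟩
    simp only [Finset.mem_filter, Finset.mem_image, Finset.mem_Icc, SS_mem]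
    constructor
    · rintro ⟨⟨h1, h2, h3⟩, h4, h5⟩
      exact ⟨p1, ⟨h5, by omega⟩, by rw [h4]⟩
    · rintro ⟨i, ⟨h1, h2⟩, h3⟩
      injection h3 with h3a h3b
      subst h3a; subst h3b
      exact ⟨⟨by omega, by omega, le_rfl⟩, rfl, h1⟩
  rw [heq, Finset.card_image_of_injective _ (fun x y h => by simpa using h),
    Nat.card_Icc]
  omega

lemma countD (hI : I.Nonempty) (hIs : I ⊆ Finset.Icc 1 (r-1)) (hr : 5 ≤ r) :
    ((SS r).filter (fun p => p.1 ∈ I ∧ p.2 < nextI r I p.1)).card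
      = (r - 1 - minI r I) - (I.card - 1) := by
  have hm := minI_mem hI hIs hr
  have hmb := mem_I_bounds hIs hm
  have heq : (SS r).filter (fun p => p.1 ∈ I ∧ p.2 < nextI r I p.1)
      = ((Finset.Ioo (minI r I) r) \ I).image (fun j => (prevI I j, j)) := by
    ext ⟨p1, p2⟩
    simp only [Finset.mem_filter, Finset.mem_image, Finset.mem_sdiff, Finset.mem_Ioo, SS_mem]
    constructor
    · rintro ⟨⟨h1, h2, h3⟩, h4, h5⟩
      have hp1b := mem_I_bounds hIs h4
      obtain ⟨hN, hlt, hle⟩ := nextI_spec (I := I) hr (show p1 < r by omega)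
      have hnler : nextI r I p1 ≤ r := by
        rcases Finset.mem_insert.1 hN with h | h
        · omega
        · exact (mem_I_bounds hIs h).2.trans (by omega)
      have hmlep1 : minI r I ≤ p1 := minI_le hI hIs hr h4
      have hp2r : p2 < r := by omega
      have hp2I : p2 ∉ I := fun hc =>
        absurd (hle p2 (Finset.mem_insert_of_mem hc) h2) (by omega)
      have hmp2 : minI r I < p2 := by omega
      obtain ⟨ha1, ha2, ha3⟩ := prevI_spec hI hIs hr hmp2
      have h6 : p1 ≤ prevI I p2 := ha3 p1 h4 h2
      have h7 : prevI I p2 ≤ p1 := by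
        by_contra hc
        have := hle (prevI I p2) (Finset.mem_insert_of_mem ha1) (by omega)
        omega
      refine ⟨p2, ⟨⟨hmp2, hp2r⟩, hp2I⟩, ?_⟩
      have : prevI I p2 = p1 := by omega
      rw [this]
    · rintro ⟨j, ⟨⟨hj1, hj2⟩, hjI⟩, h3⟩
      obtain ⟨ha1, ha2, ha3⟩ := prevI_spec hI hIs hr hj1
      have hab := mem_I_bounds hIs ha1
      obtain ⟨hN, hlt, hle⟩ := nextI_spec (I := I) hr (show prevI I j < r by omega)
      have hjn : j < nextI r I (prevI I j) := by
        by_contra hc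
        rcases Finset.mem_insert.1 hN with h | h
        · omega
        · have hne : nextI r I (prevI I j) ≠ j := fun hc' => hjI (hc' ▸ h)
          have := ha3 _ h (by omega)
          omega
      injection h3 with h3a h3b
      subst h3a; subst h3b
      exact ⟨⟨hab.1, ha2, by omega⟩, ha1, hjn⟩
  rw [heq, Finset.card_image_of_injective _ (fun x y h => congrArg Prod.snd h)]
  have h2 : (Finset.Ioo (minI r I) r) \ I = (Finset.Ioo (minI r I) r) \ (I.erase (minI r I)) := by
    ext x
    simp only [Finset.mem_sdiff, Finset.mem_Ioo, Finset.mem_erase]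
    constructor
    · rintro ⟨h1, h2⟩; exact ⟨h1, fun hc => h2 hc.2⟩
    · rintro ⟨h1, h2⟩
      refine ⟨h1, fun hc => h2 ⟨by omega, hc⟩⟩
  have hsub : I.erase (minI r I) ⊆ Finset.Ioo (minI r I) r := by
    intro x hx
    rw [Finset.mem_erase] at hx
    have := mem_I_bounds hIs hx.2
    have := minI_le hI hIs hr hx.2
    simp only [Finset.mem_Ioo]
    omega
  rw [h2, Finset.card_sdiff_of_subset hsub, Nat.card_Ioo, Finset.card_erase_of_mem hm]
  omega

lemma cardSS (r : ℕ) : 2 * (SS r).card = r * (r - 1) := by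
  rw [Finset.card_eq_sum_card_fiberwise
    (f := Prod.snd) (t := Finset.Icc 1 r)
    (fun x hx => by obtain ⟨h1, h2, h3⟩ := SS_mem.1 hx; simp only [Finset.coe_Icc, Set.mem_Icc]; omega)]
  have hfib : ∀ j ∈ Finset.Icc 1 r, ((SS r).filter (fun x => x.2 = j)).card = j - 1 := by
    intro j hj
    rw [Finset.mem_Icc] at hj
    have heq : (SS r).filter (fun x => x.2 = j) = (Finset.Icc 1 (j-1)).image (fun i => (i, j)) := by
      ext ⟨p1, p2⟩
      simp only [Finset.mem_filter, Finset.mem_image, Finset.mem_Icc, SS_mem]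
      constructor
      · rintro ⟨⟨h1, h2, h3⟩, h4⟩
        exact ⟨p1, ⟨h1, by omega⟩, by rw [h4]⟩
      · rintro ⟨i, ⟨h1, h2⟩, h3⟩
        injection h3 with h3a h3b
        subst h3a; subst h3b
        exact ⟨⟨h1, by omega, hj.2⟩, rfl⟩
    rw [heq, Finset.card_image_of_injective _ (fun x y h => by simpa using h), Nat.card_Icc]
    omega
  rw [Finset.sum_congr rfl hfib]
  have gauss : ∀ n : ℕ, 2 * (∑ j ∈ Finset.Icc 1 n, (j - 1)) = n * (n - 1) := by
    intro n
    induction n with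
    | zero => simp
    | succ k ih =>
      rw [Finset.sum_Icc_succ_top (by omega)]
      have : (k + 1) * (k + 1 - 1) = k * (k - 1) + 2 * k := by
        cases k with
        | zero => simp
        | succ m => simp only [Nat.add_sub_cancel]; ring
      rw [this, Nat.mul_add, ih]
      omega
  exact gauss r

end countsec


/-- `ℓ(c_I) = r(r-1) - (2r - 2·min I - #I)`; equivalently the
number of positive roots sent to positive roots by `c_I` is `2r - 2·min I - #I`. -/
theorem stmt16 (r : ℕ) (hr : 5 ≤ r) (hodd : Odd r)
    (I : Finset ℕ) (hI : I.Nonempty) (hIs : I ⊆ Finset.Icc 1 (r - 1)) :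
    {β | β ∈ Pos r ∧ -(cI r I β) ∈ Pos r}.ncard
        = r * (r - 1) - (2 * r - 2 * minI r I - I.card) ∧
    {β | β ∈ Pos r ∧ cI r I β ∈ Pos r}.ncard
        = 2 * r - 2 * minI r I - I.card := by
  --

  have hm := minI_mem hI hIs hr
  have hmb := mem_I_bounds hIs hm
  have hk1 : 1 ≤ I.card := Finset.card_pos.2 hI
  have hkle : I.card ≤ r - minI r I := by
    have hsub : I ⊆ Finset.Icc (minI r I) (r - 1) := by
      intro x hx
      rw [Finset.mem_Icc]
      exact ⟨minI_le hI hIs hr hx, (mem_I_bounds hIs hx).2⟩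
    have := Finset.card_le_card hsub
    rw [Nat.card_Icc] at this
    omega
  have hcD := countD hI hIs hr
  have hcS := countS hI hIs hr
  have hSS := cardSS r
  have hpos : {β | β ∈ Pos r ∧ cI r I β ∈ Pos r}.ncard
      = ((SS r).filter (fun p => p.1 ∈ I ∧ p.2 < nextI r I p.1)).card
        + ((SS r).filter (fun p => p.2 = r ∧ minI r I ≤ p.1)).card := by
    apply ncard_eq
    · intro p hp
      obtain ⟨h1, h2, h3⟩ := SS_mem.1 hp
      exact (keyD hI hIs hr h1 h2 h3).1
    · intro p hp
      obtain ⟨h1, h2, h3⟩ := SS_mem.1 hp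
      exact (keyS hI hIs hr h1 h2 h3).1
  have hneg : {β | β ∈ Pos r ∧ -(cI r I β) ∈ Pos r}.ncard
      = ((SS r).filter (fun p => ¬(p.1 ∈ I ∧ p.2 < nextI r I p.1))).card
        + ((SS r).filter (fun p => ¬(p.2 = r ∧ minI r I ≤ p.1))).card := by
    apply ncard_eq
    · intro p hp
      obtain ⟨h1, h2, h3⟩ := SS_mem.1 hp
      exact (keyD hI hIs hr h1 h2 h3).2
    · intro p hp
      obtain ⟨h1, h2, h3⟩ := SS_mem.1 hp
      exact (keyS hI hIs hr h1 h2 h3).2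
  have hc1 := Finset.card_filter_add_card_filter_not
    (s := SS r) (p := fun p => p.1 ∈ I ∧ p.2 < nextI r I p.1)
  have hc2 := Finset.card_filter_add_card_filter_not
    (s := SS r) (p := fun p => p.2 = r ∧ minI r I ≤ p.1)
  constructor
  · rw [hneg, ← hSS]
    omega
  · rw [hpos]
    omega

end
end

section
/- Define the graph B_{r−1} with vertex set all subsets of {1,…,r−1} and an edge between I and I Δ {a} iff either 1 ≤ a ≤ r−2 and a+1 ∈ I, or a = r−1. Then the degree of a non-empty vertex I is 1 + #(I ∖ {1}), the degree of ∅ is 1, the graph is connected, and its number of edges is 2^{r−2} + (r−2)·2^{r−3}. -/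
noncomputable section

open Finset

/-- The toggle adjacency on subsets of `{1,…,r-1}`: `S ∼ S Δ {a}` iff
(`1 ≤ a ≤ r-2` and `a+1 ∈ S`) or `a = r-1`. -/
def AdjB (r : ℕ) (S T : Finset ℕ) : Prop :=
  ∃ a, ((1 ≤ a ∧ a ≤ r - 2 ∧ a + 1 ∈ S) ∨ a = r - 1) ∧ T = symmDiff S {a}

/-- Degree of a vertex in the subset graph `B_{r-1}`. -/
def degB (r : ℕ) (S : Finset ℕ) : ℕ := {T : Finset ℕ | AdjB r S T}.ncard

lemma symmDiff_singleton_mem' {S : Finset ℕ} {a : ℕ} (h : a ∈ S) :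
    symmDiff S {a} = S.erase a := by
  ext x; rcases eq_or_ne x a with rfl|hx <;> simp_all [mem_symmDiff]

lemma symmDiff_singleton_not_mem' {S : Finset ℕ} {a : ℕ} (h : a ∉ S) :
    symmDiff S {a} = insert a S := by
  ext x; rcases eq_or_ne x a with rfl|hx <;> simp_all [mem_symmDiff]

lemma adjB_symm {r : ℕ} {S T : Finset ℕ} (h : AdjB r S T) : AdjB r T S := by
  obtain ⟨a, ha, rfl⟩ := h
  refine ⟨a, ?_, (symmDiff_symmDiff_cancel_right {a} S).symm⟩
  rcases ha with ⟨h1, h2, h3⟩ | h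
  · exact Or.inl ⟨h1, h2, by simp [mem_symmDiff, h3]⟩
  · exact Or.inr h

def PathB (r : ℕ) (S T : Finset ℕ) : Prop :=
  ∃ (n : ℕ) (f : ℕ → Finset ℕ), f 0 = S ∧ f n = T ∧ ∀ i < n, AdjB r (f i) (f (i + 1))

lemma pathB_refl (r : ℕ) (S : Finset ℕ) : PathB r S S :=
  ⟨0, fun _ => S, rfl, rfl, by omega⟩

lemma pathB_single {r : ℕ} {S T : Finset ℕ} (h : AdjB r S T) : PathB r S T :=
  ⟨1, fun i => if i = 0 then S else T, by simp, by simp, by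
    intro i hi
    have : i = 0 := by omega
    subst this; simpa⟩

lemma pathB_trans {r : ℕ} {S T U : Finset ℕ} (h1 : PathB r S T) (h2 : PathB r T U) :
    PathB r S U := by
  obtain ⟨n, f, hf0, hfn, hf⟩ := h1
  obtain ⟨m, g, hg0, hgm, hg⟩ := h2
  refine ⟨n + m, fun i => if i < n then f i else g (i - n), ?_, ?_, ?_⟩
  · rcases Nat.eq_zero_or_pos n with rfl|hn
    · simpa [hg0, ← hfn] using hf0
    · simpa [hn]
  · simpa using hgm
  · intro i hi
    rcases lt_trichotomy (i+1) n with h|h|h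
    · have hi' : i < n := by omega
      simpa only [if_pos hi', if_pos h] using hf i hi'
    · have hi' : i < n := by omega
      simp only [if_pos hi', if_neg (by omega : ¬ (i+1 < n))]
      have he : g (i+1-n) = f (i+1) := by rw [show i+1-n = 0 by omega, hg0, ← hfn, h]
      rw [he]; exact hf i hi'
    · have h1' : ¬ i < n := by omega
      simp only [if_neg h1', if_neg (by omega : ¬ (i+1 < n))]
      rw [show i + 1 - n = (i - n) + 1 by omega]
      exact hg (i - n) (by omega)

lemma pathB_symm {r : ℕ} {S T : Finset ℕ} (h : PathB r S T) : PathB r T S := by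
  obtain ⟨n, f, hf0, hfn, hf⟩ := h
  refine ⟨n, fun i => f (n - i), by simpa, by simpa, ?_⟩
  intro i hi
  have h1 : n - i = (n - (i+1)) + 1 := by omega
  show AdjB r (f (n - i)) (f (n - (i+1)))
  rw [h1]
  exact adjB_symm (hf (n - (i+1)) (by omega))

lemma adjB_toggle {r : ℕ} {S : Finset ℕ} {a : ℕ}
    (h : (1 ≤ a ∧ a ≤ r - 2 ∧ a + 1 ∈ S) ∨ a = r - 1) :
    AdjB r S (symmDiff S {a}) := ⟨a, h, rfl⟩

lemma remove_max (r : ℕ) (hr : 3 ≤ r) :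
    ∀ k S, S ⊆ Finset.Icc 1 (r - 1) → ∀ m ∈ S, (∀ x ∈ S, x ≤ m) →
      r - 1 - m = k → PathB r S (S.erase m) := by
  intro k
  induction k with
  | zero =>
    intro S hS m hm hmax hk
    have hm' := hS hm
    simp only [Finset.mem_Icc] at hm'
    have hmr : m = r - 1 := by omega
    have h := adjB_toggle (r := r) (S := S) (a := r-1) (Or.inr rfl)
    rw [← hmr, symmDiff_singleton_mem' hm] at h
    exact pathB_single h
  | succ k ih =>
    intro S hS m hm hmax hk
    have hm' := hS hm
    simp only [Finset.mem_Icc] at hm'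
    have hm1S : m + 1 ∉ S := fun h => by have := hmax _ h; omega
    have hS'sub : insert (m+1) S ⊆ Finset.Icc 1 (r-1) := by
      intro x hx
      rcases Finset.mem_insert.mp hx with rfl|hx
      · simp only [Finset.mem_Icc]; omega
      · exact hS hx
    have p1 : PathB r (insert (m+1) S) S := by
      have h := ih (insert (m+1) S) hS'sub (m+1) (Finset.mem_insert_self _ _)
        (fun x hx => by rcases Finset.mem_insert.mp hx with rfl|hx
                        · exact le_refl _
                        · exact le_trans (hmax x hx) (by omega)) (by omega)
      rwa [Finset.erase_insert hm1S] at h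
    have hstep : AdjB r (insert (m+1) S) (insert (m+1) (S.erase m)) := by
      have h := adjB_toggle (r := r) (S := insert (m+1) S) (a := m)
        (Or.inl ⟨hm'.1, by omega, Finset.mem_insert_self _ _⟩)
      rwa [symmDiff_singleton_mem' (Finset.mem_insert_of_mem hm),
        Finset.erase_insert_of_ne (by omega)] at h
    have p3 : PathB r (insert (m+1) (S.erase m)) (S.erase m) := by
      have hsub : insert (m+1) (S.erase m) ⊆ Finset.Icc 1 (r-1) := by
        intro x hx
        rcases Finset.mem_insert.mp hx with rfl|hx
        · simp only [Finset.mem_Icc]; omega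
        · exact hS (Finset.mem_of_mem_erase hx)
      have h := ih (insert (m+1) (S.erase m)) hsub (m+1) (Finset.mem_insert_self _ _)
        (fun x hx => by rcases Finset.mem_insert.mp hx with rfl|hx
                        · exact le_refl _
                        · exact le_trans (hmax x (Finset.mem_of_mem_erase hx)) (by omega))
        (by omega)
      rwa [Finset.erase_insert (fun hc => hm1S (Finset.mem_of_mem_erase hc))] at h
    exact pathB_trans (pathB_symm p1) (pathB_trans (pathB_single hstep) p3)

lemma pathB_to_empty (r : ℕ) (hr : 3 ≤ r) :
    ∀ N S, S.card ≤ N → S ⊆ Finset.Icc 1 (r-1) → PathB r S ∅ := by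
  intro N
  induction N with
  | zero =>
    intro S h hS
    rw [Finset.card_eq_zero.mp (Nat.le_antisymm h (Nat.zero_le _))]
    exact pathB_refl r ∅
  | succ N ih =>
    intro S h hS
    rcases S.eq_empty_or_nonempty with rfl|hne
    · exact pathB_refl r ∅
    · have hmem := S.max'_mem hne
      have p := remove_max r hr (r-1-S.max' hne) S hS _ hmem (fun x hx => S.le_max' x hx) rfl
      refine pathB_trans p (ih (S.erase (S.max' hne)) ?_ (fun x hx => hS (Finset.mem_of_mem_erase hx)))
      rw [Finset.card_erase_of_mem hmem]
      have := Finset.card_pos.mpr hne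
      omega

def toggles (r : ℕ) (S : Finset ℕ) : Finset ℕ :=
  insert (r - 1) ((S \ {1}).image (· - 1))

lemma mem_toggles {r : ℕ} (hr : 3 ≤ r) {S : Finset ℕ} (hS : S ⊆ Finset.Icc 1 (r-1)) {a : ℕ} :
    a ∈ toggles r S ↔ ((1 ≤ a ∧ a ≤ r - 2 ∧ a + 1 ∈ S) ∨ a = r - 1) := by
  simp only [toggles, Finset.mem_insert, Finset.mem_image, Finset.mem_sdiff,
    Finset.mem_singleton]
  constructor
  · rintro (rfl | ⟨s, ⟨hs, hs1⟩, rfl⟩)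
    · exact Or.inr rfl
    · have hsI := hS hs
      simp only [Finset.mem_Icc] at hsI
      exact Or.inl ⟨by omega, by omega, by rwa [show s - 1 + 1 = s by omega]⟩
  · rintro (⟨h1, h2, h3⟩ | rfl)
    · exact Or.inr ⟨a + 1, ⟨h3, by omega⟩, by omega⟩
    · exact Or.inl rfl

lemma adjB_iff {r : ℕ} (hr : 3 ≤ r) {S : Finset ℕ} (hS : S ⊆ Finset.Icc 1 (r-1))
    {T : Finset ℕ} : AdjB r S T ↔ ∃ a ∈ toggles r S, T = symmDiff S {a} := by
  constructor
  · rintro ⟨a, ha, rfl⟩; exact ⟨a, (mem_toggles hr hS).mpr ha, rfl⟩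
  · rintro ⟨a, ha, rfl⟩; exact ⟨a, (mem_toggles hr hS).mp ha, rfl⟩

lemma card_toggles {r : ℕ} (hr : 3 ≤ r) {S : Finset ℕ} (hS : S ⊆ Finset.Icc 1 (r-1)) :
    (toggles r S).card = 1 + (S \ {1}).card := by
  have h1 : ((S \ {1}).image (· - 1)).card = (S \ {1}).card := by
    apply Finset.card_image_of_injOn
    intro x hx y hy h
    simp only [Finset.mem_coe, Finset.mem_sdiff, Finset.mem_singleton] at hx hy
    have hx' := hS hx.1; have hy' := hS hy.1
    simp only [Finset.mem_Icc] at hx' hy'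
    have h' : x - 1 = y - 1 := h
    omega
  have h2 : r - 1 ∉ (S \ {1}).image (· - 1) := by
    simp only [Finset.mem_image, Finset.mem_sdiff, Finset.mem_singleton, not_exists]
    rintro s ⟨⟨hs, hs1⟩, he⟩
    have := hS hs; simp only [Finset.mem_Icc] at this; omega
  rw [toggles, Finset.card_insert_of_notMem h2, h1]; omega

lemma degB_eq {r : ℕ} (hr : 3 ≤ r) {S : Finset ℕ} (hS : S ⊆ Finset.Icc 1 (r-1)) :
    degB r S = 1 + (S \ {1}).card := by
  have hset : {T : Finset ℕ | AdjB r S T}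
      = ↑((toggles r S).image (fun a => symmDiff S {a})) := by
    ext T
    simp only [Set.mem_setOf_eq, Finset.coe_image, Set.mem_image, Finset.mem_coe]
    rw [adjB_iff hr hS]
    constructor
    · rintro ⟨a, ha, rfl⟩; exact ⟨a, ha, rfl⟩
    · rintro ⟨a, ha, rfl⟩; exact ⟨a, ha, rfl⟩
  rw [degB, hset, Set.ncard_coe_finset, Finset.card_image_of_injOn, card_toggles hr hS]
  intro x _ y _ h
  exact Finset.singleton_injective (symmDiff_right_injective S h)

lemma filter_mem_powerset (U : Finset ℕ) (x : ℕ) (hx : x ∈ U) :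
    (U.powerset.filter (fun S => x ∈ S)).card = 2 ^ (U.card - 1) := by
  classical
  have himg : U.powerset.filter (fun S => x ∈ S)
      = ((U.erase x).powerset).image (insert x) := by
    ext S
    simp only [Finset.mem_filter, Finset.mem_powerset, Finset.mem_image]
    constructor
    · rintro ⟨hsub, hxS⟩
      refine ⟨S.erase x, ?_, Finset.insert_erase hxS⟩
      exact fun y hy => Finset.mem_erase.mpr
        ⟨(Finset.mem_erase.mp hy).1, hsub (Finset.mem_of_mem_erase hy)⟩
    · rintro ⟨T, hT, rfl⟩
      refine ⟨?_, Finset.mem_insert_self _ _⟩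
      intro y hy
      rcases Finset.mem_insert.mp hy with rfl|hy
      · exact hx
      · exact Finset.mem_of_mem_erase (hT hy)
  rw [himg, Finset.card_image_of_injOn, Finset.card_powerset, Finset.card_erase_of_mem hx]
  intro T1 h1 T2 h2 h
  simp only [Finset.mem_coe, Finset.mem_powerset] at h1 h2
  have hx1 : x ∉ T1 := fun hc => (Finset.mem_erase.mp (h1 hc)).1 rfl
  have hx2 : x ∉ T2 := fun hc => (Finset.mem_erase.mp (h2 hc)).1 rfl
  rw [← Finset.erase_insert hx1, ← Finset.erase_insert hx2, h]

/-- in `B_{r-1}` the degree of a nonempty vertex `I` is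
`1 + #(I ∖ {1})`, the degree of `∅` is `1`, the graph is connected, and the
number of edges is `2^{r-2} + (r-2)·2^{r-3}` (stated via ordered pairs). -/
theorem stmt18 (r : ℕ) (hr : 3 ≤ r) :
    (∀ S : Finset ℕ, S ⊆ Finset.Icc 1 (r - 1) → S.Nonempty →
      degB r S = 1 + (S \ {1}).card) ∧
    degB r ∅ = 1 ∧
    (∀ S : Finset ℕ, S ⊆ Finset.Icc 1 (r - 1) →
      ∃ (n : ℕ) (f : ℕ → Finset ℕ), f 0 = S ∧ f n = ∅ ∧
        ∀ i < n, AdjB r (f i) (f (i + 1))) ∧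
    {p : Finset ℕ × Finset ℕ |
        p.1 ⊆ Finset.Icc 1 (r - 1) ∧ AdjB r p.1 p.2}.ncard
      = 2 * (2 ^ (r - 2) + (r - 2) * 2 ^ (r - 3)) := by
  classical
  refine ⟨fun S hS _ => degB_eq hr hS, ?_, ?_, ?_⟩
  · simpa using degB_eq hr (S := ∅) (by simp)
  · intro S hS
    exact pathB_to_empty r hr S.card S le_rfl hS
  · set F : Finset (Finset ℕ × Finset ℕ) :=
      (Finset.Icc 1 (r-1)).powerset.biUnion
        (fun S => (toggles r S).image (fun a => (S, symmDiff S {a}))) with hF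
    have hset : {p : Finset ℕ × Finset ℕ |
        p.1 ⊆ Finset.Icc 1 (r - 1) ∧ AdjB r p.1 p.2} = ↑F := by
      ext ⟨S, T⟩
      simp only [Set.mem_setOf_eq, Finset.mem_coe, hF, Finset.mem_biUnion,
        Finset.mem_image, Finset.mem_powerset, Prod.mk.injEq]
      constructor
      · rintro ⟨h1, h2⟩
        obtain ⟨a, ha, rfl⟩ := (adjB_iff hr h1).mp h2
        exact ⟨S, h1, a, ha, rfl, rfl⟩
      · rintro ⟨S', hS', a, ha, rfl, rfl⟩
        exact ⟨hS', (adjB_iff hr hS').mpr ⟨a, ha, rfl⟩⟩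
    rw [hset, Set.ncard_coe_finset, hF, Finset.card_biUnion]
    swap
    · intro S₁ _ S₂ _ hne
      simp only [Finset.disjoint_left, Finset.mem_image]
      rintro p ⟨a, _, rfl⟩ ⟨b, _, he⟩
      exact hne (congrArg Prod.fst he).symm
    have hterm : ∀ S ∈ (Finset.Icc 1 (r-1)).powerset,
        ((toggles r S).image (fun a => (S, symmDiff S {a}))).card = 1 + (S \ {1}).card := by
      intro S hS
      rw [Finset.card_image_of_injOn, card_toggles hr (Finset.mem_powerset.mp hS)]
      intro x _ y _ h
      exact Finset.singleton_injective (symmDiff_right_injective S (congrArg Prod.snd h))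
    rw [Finset.sum_congr rfl hterm, Finset.sum_add_distrib]
    have hUcard : (Finset.Icc 1 (r-1)).card = r - 1 := by rw [Nat.card_Icc]; omega
    have hsum1 : (∑ _S ∈ (Finset.Icc 1 (r-1)).powerset, 1) = 2 ^ (r - 1) := by
      rw [Finset.sum_const, smul_eq_mul, mul_one, Finset.card_powerset, hUcard]
    have hsum2 : (∑ S ∈ (Finset.Icc 1 (r-1)).powerset, (S \ {1}).card)
        = (r - 2) * 2 ^ (r - 2) := by
      have e1 : ∀ S ∈ (Finset.Icc 1 (r-1)).powerset,
          (S \ {1}).card = ∑ x ∈ (Finset.Icc 1 (r-1)).erase 1, (if x ∈ S then 1 else 0) := by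
        intro S hS
        rw [← Finset.card_filter]
        congr 1
        ext x
        simp only [Finset.mem_sdiff, Finset.mem_singleton, Finset.mem_filter, Finset.mem_erase]
        constructor
        · rintro ⟨hx, h1⟩; exact ⟨⟨h1, Finset.mem_powerset.mp hS hx⟩, hx⟩
        · rintro ⟨⟨h1, _⟩, hx⟩; exact ⟨hx, h1⟩
      rw [Finset.sum_congr rfl e1, Finset.sum_comm]
      have e2 : ∀ x ∈ (Finset.Icc 1 (r-1)).erase 1,
          (∑ S ∈ (Finset.Icc 1 (r-1)).powerset, if x ∈ S then 1 else 0) = 2 ^ (r - 2) := by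
        intro x hx
        rw [← Finset.card_filter, filter_mem_powerset _ x (Finset.mem_of_mem_erase hx), hUcard,
          show r - 1 - 1 = r - 2 by omega]
      rw [Finset.sum_congr rfl e2, Finset.sum_const, smul_eq_mul,
        Finset.card_erase_of_mem (by simp only [Finset.mem_Icc]; omega), hUcard,
        show r - 1 - 1 = r - 2 by omega]
    rw [hsum1, hsum2]
    obtain ⟨k, rfl⟩ : ∃ k, r = k + 3 := ⟨r - 3, by omega⟩
    have e1 : k + 3 - 1 = k + 2 := by omega
    have e2 : k + 3 - 2 = k + 1 := by omega
    have e3 : k + 3 - 3 = k := by omega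
    rw [e1, e2, e3, pow_succ, pow_succ]
    ring

end
end
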